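/- arXiv:math/0702290 — 5 statements merged into one kernel-verified Lean document; each statement's English description precedes it below -/
import Mathlib

section
/- Let (L, Φ, Σ) be a comonad over dom on the arrow category of C, let (f, s) and (g, t) be L-coalgebras with f : X → Y an isomorphism in C. Then every commutative square (h, k) : f → g in the arrow category is automatically a morphism of L-coalgebras (f, s) → (g, t). -/
open CategoryTheory CategoryTheory.Limits

universe v u

variable {C : Type u} [Category.{v} C]

/-- A coalgebra structure (over `dom`) for a comonad `L` over `dom` on the arrow category. -/
def IsCoalg (L : Comonad (Arrow C))
    (hL : L.toFunctor ⋙ Arrow.leftFunc = Arrow.leftFunc)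
    {f : Arrow C} (θ : f ⟶ L.obj f) : Prop :=
  θ.left = eqToHom ((Functor.congr_obj hL f).symm) ∧
  θ ≫ L.ε.app f = 𝟙 f ∧
  θ ≫ L.δ.app f = θ ≫ L.map θ

/-! A morphism of arrows out of an epimorphism `f` is determined by its domain component.
Over `dom`, the coalgebra structures have identity domain components and `L` acts on squares
as the identity on domains, so `sq ≫ θg` and `θf ≫ L.map sq` both have domain component
`sq.left`. -/

namespace CategoryTheory.Arrow

theorem hom_ext_of_epi {f g : Arrow C} [Epi f.hom] {α β : f ⟶ g} (h : α.left = β.left) :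
    α = β := by
  ext
  · exact h
  · rw [← cancel_epi f.hom, ← w α, ← w β, h]

theorem map_left_eq_of_comp_leftFunc_eq {F : Arrow C ⥤ Arrow C}
    (hF : F ⋙ leftFunc = leftFunc) {f g : Arrow C} (sq : f ⟶ g) :
    (F.map sq).left =
      eqToHom (show (F.obj f).left = f.left from Functor.congr_obj hF f) ≫ sq.left ≫
        eqToHom (show (F.obj g).left = g.left from Functor.congr_obj hF g).symm :=
  Functor.congr_hom hF sq

end CategoryTheory.Arrow

theorem IsCoalg.left_eq {L : Comonad (Arrow C)}
    {hL : L.toFunctor ⋙ Arrow.leftFunc = Arrow.leftFunc} {f : Arrow C} {θ : f ⟶ L.obj f} (hθ : IsCoalg L hL θ) :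
    θ.left = eqToHom (show (L.obj f).left = f.left from Functor.congr_obj hL f).symm :=
  hθ.1

theorem stmt2_general (L : Comonad (Arrow C))
    (hL : L.toFunctor ⋙ Arrow.leftFunc = Arrow.leftFunc)
    {f g : Arrow C} (θf : f ⟶ L.obj f) (θg : g ⟶ L.obj g)
    (hθf : IsCoalg L hL θf) (hθg : IsCoalg L hL θg)
    (hf : IsIso f.hom) (sq : f ⟶ g) :
    sq ≫ θg = θf ≫ L.map sq := by
  apply Arrow.hom_ext_of_epi
  simp [hθf.left_eq, hθg.left_eq, Arrow.map_left_eq_of_comp_leftFunc_eq hL sq]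

/-- Given a comonad `L` over `dom` on the arrow category and `L`-coalgebras
`(f, s)` and `(g, t)` with `f` an isomorphism, every commutative square `(h, k) : f → g`
is automatically a morphism of `L`-coalgebras. -/
theorem stmt2 (L : Comonad (Arrow C))
    (hL : L.toFunctor ⋙ Arrow.leftFunc = Arrow.leftFunc)
    (hcounit : ∀ f : Arrow C, (L.ε.app f).left = eqToHom (Functor.congr_obj hL f))
    (hcomul : ∀ f : Arrow C,
      (L.δ.app f).left = eqToHom ((Functor.congr_obj hL (L.obj f)).symm))
    {f g : Arrow C} (θf : f ⟶ L.obj f) (θg : g ⟶ L.obj g)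
    (hθf : IsCoalg L hL θf) (hθg : IsCoalg L hL θg)
    (hf : IsIso f.hom) (sq : f ⟶ g) :
    sq ≫ θg = θf ≫ L.map sq :=
  stmt2_general L hL θf θg hθf hθg hf sq
end

section
/- For any category C, the category Ff_C of functorial factorisations on C carries a strict monoidal structure (⊗, I) such that monoid objects in (Ff_C, ⊗, I) correspond precisely to monads (R, Λ, Π) on the arrow category C² satisfying cod ∘ R = cod, cod · Λ = 1 and cod · Π = 1 ('monads over cod'). -/
open CategoryTheory CategoryTheory.Limits

universe v u

variable (C : Type u) [Category.{v} C]

/-- A functorial factorisation on `C`: a functor `E : C² → C` with natural transformations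
`λ : dom ⇒ E` and `ρ : E ⇒ cod` whose composite is the canonical `κ : dom ⇒ cod`. -/
structure Ff where
  E : Arrow C ⥤ C
  l : (Arrow.leftFunc : Arrow C ⥤ C) ⟶ E
  r : E ⟶ (Arrow.rightFunc : Arrow C ⥤ C)
  fact : ∀ f : Arrow C, l.app f ≫ r.app f = f.hom

variable {C}

instance : Category (Ff C) where
  Hom A B := { α : A.E ⟶ B.E // A.l ≫ α = B.l ∧ α ≫ B.r = A.r }
  id A := ⟨𝟙 A.E, by simp, by simp⟩
  comp {A B D} f g := ⟨f.1 ≫ g.1, by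
      rw [← Category.assoc, f.2.1, g.2.1], by
      rw [Category.assoc, g.2.2, f.2.2]⟩
  id_comp f := Subtype.ext (Category.id_comp f.1)
  comp_id f := Subtype.ext (Category.comp_id f.1)
  assoc f g h := Subtype.ext (Category.assoc f.1 g.1 h.1)

/-- A strict monoidal structure on a category, with strictness expressed by equalities of
objects and `eqToHom`-coherences on morphisms. -/
structure StrictMonoidalStruct (V : Type u) [Category.{v} V] where
  tObj : V → V → V
  tHom : ∀ {A B A' B' : V}, (A ⟶ B) → (A' ⟶ B') → (tObj A A' ⟶ tObj B B')
  unit : V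
  tHom_id : ∀ A A', tHom (𝟙 A) (𝟙 A') = 𝟙 (tObj A A')
  tHom_comp : ∀ {A B D A' B' D' : V} (f : A ⟶ B) (g : B ⟶ D) (f' : A' ⟶ B') (g' : B' ⟶ D'),
    tHom (f ≫ g) (f' ≫ g') = tHom f f' ≫ tHom g g'
  assoc_obj : ∀ A B D, tObj (tObj A B) D = tObj A (tObj B D)
  unit_left : ∀ A, tObj unit A = A
  unit_right : ∀ A, tObj A unit = A
  assoc_hom : ∀ {A B D A' B' D' : V} (f : A ⟶ A') (g : B ⟶ B') (h : D ⟶ D'),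
    tHom (tHom f g) h =
      eqToHom (assoc_obj A B D) ≫ tHom f (tHom g h) ≫ eqToHom (assoc_obj A' B' D').symm
  unit_left_hom : ∀ {A A' : V} (f : A ⟶ A'),
    tHom (𝟙 unit) f = eqToHom (unit_left A) ≫ f ≫ eqToHom (unit_left A').symm
  unit_right_hom : ∀ {A A' : V} (f : A ⟶ A'),
    tHom f (𝟙 unit) = eqToHom (unit_right A) ≫ f ≫ eqToHom (unit_right A').symm

/-- The strict monoidal structure `(⊗, I)` on `Ff C`: the tensor refactorises the right half,
`(E', λ', ρ') ⊗ (E, λ, ρ)` factorising `f` as `(λ'_{Rf} ∘ λ_f, ρ'_{Rf})`, and the unit is the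
factorisation `f = f ∘ id`, given by `(dom, 1, κ)`. -/
def TensorSpec (M : StrictMonoidalStruct (Ff C)) : Prop :=
  ∃ hU : M.unit.E = (Arrow.leftFunc : Arrow C ⥤ C),
    (∀ f : Arrow C, M.unit.l.app f = eqToHom ((Functor.congr_obj hU f).symm)) ∧
    ∃ hE : ∀ (F' F : Ff C) (f : Arrow C),
        (M.tObj F' F).E.obj f = F'.E.obj (Arrow.mk (F.r.app f)),
      (∀ (F' F : Ff C) (f : Arrow C),
        (M.tObj F' F).l.app f =
          F.l.app f ≫ F'.l.app (Arrow.mk (F.r.app f)) ≫ eqToHom (hE F' F f).symm) ∧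
      (∀ (F' F : Ff C) (f : Arrow C),
        (M.tObj F' F).r.app f = eqToHom (hE F' F f) ≫ F'.r.app (Arrow.mk (F.r.app f)))

/-- The strict monoidal structure `(⊙, ⊥)` on `Ff C`: the tensor refactorises the left half,
`(E', λ', ρ') ⊙ (E, λ, ρ)` factorising `f` as `(λ'_{Lf}, ρ_f ∘ ρ'_{Lf})`, and the unit is the
factorisation `f = id ∘ f`, given by `(cod, κ, 1)`. -/
def CotensorSpec (M : StrictMonoidalStruct (Ff C)) : Prop :=
  ∃ hU : M.unit.E = (Arrow.rightFunc : Arrow C ⥤ C),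
    (∀ f : Arrow C, M.unit.r.app f = eqToHom (Functor.congr_obj hU f)) ∧
    ∃ hE : ∀ (F' F : Ff C) (f : Arrow C),
        (M.tObj F' F).E.obj f = F'.E.obj (Arrow.mk (F.l.app f)),
      (∀ (F' F : Ff C) (f : Arrow C),
        (M.tObj F' F).l.app f = F'.l.app (Arrow.mk (F.l.app f)) ≫ eqToHom (hE F' F f).symm) ∧
      (∀ (F' F : Ff C) (f : Arrow C),
        (M.tObj F' F).r.app f =
          eqToHom (hE F' F f) ≫ F'.r.app (Arrow.mk (F.l.app f)) ≫ F.r.app f)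

/-- A monad over `cod` on the arrow category: `cod ∘ R = cod` and the unit and
multiplication are the identity on codomains. -/
def IsMonadOverCod (R : Monad (Arrow C)) : Prop :=
  ∃ h : R.toFunctor ⋙ Arrow.rightFunc = Arrow.rightFunc,
    (∀ f : Arrow C, (R.η.app f).right = eqToHom ((Functor.congr_obj h f).symm)) ∧
    (∀ f : Arrow C, (R.μ.app f).right = eqToHom (Functor.congr_obj h (R.obj f)))

/-- Monoid objects with respect to a strict monoidal structure. -/
structure MonIn {V : Type u} [Category.{v} V] (M : StrictMonoidalStruct V) where
  A : V
  eta : M.unit ⟶ A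
  mu : M.tObj A A ⟶ A
  one_mul : M.tHom eta (𝟙 A) ≫ mu = eqToHom (M.unit_left A)
  mul_one : M.tHom (𝟙 A) eta ≫ mu = eqToHom (M.unit_right A)
  mul_assoc : M.tHom mu (𝟙 A) ≫ mu = eqToHom (M.assoc_obj A A A) ≫ M.tHom (𝟙 A) mu ≫ mu

instance {V : Type u} [Category.{v} V] (M : StrictMonoidalStruct V) :
    Category (MonIn M) where
  Hom X Y := { φ : X.A ⟶ Y.A // X.eta ≫ φ = Y.eta ∧ M.tHom φ φ ≫ Y.mu = X.mu ≫ φ }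
  id X := ⟨𝟙 X.A, Category.comp_id _, by rw [M.tHom_id]; simp⟩
  comp f g := ⟨f.1 ≫ g.1, by rw [← Category.assoc, f.2.1, g.2.1], by
    rw [M.tHom_comp, Category.assoc, g.2.2, ← Category.assoc, f.2.2, Category.assoc]⟩
  id_comp f := Subtype.ext (Category.id_comp f.1)
  comp_id f := Subtype.ext (Category.comp_id f.1)
  assoc f g h := Subtype.ext (Category.assoc f.1 g.1 h.1)

namespace FfAux

/-- The canonical natural transformation `κ : dom ⇒ cod`. -/
@[reducible] def kappa : (Arrow.leftFunc : Arrow C ⥤ C) ⟶ Arrow.rightFunc where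
  app f := f.hom
  naturality _ _ sq := Arrow.w sq

/-- The unit functorial factorisation `f = f ∘ id`. -/
@[reducible] def ffUnit : Ff C where
  E := Comma.fst _ _
  l := 𝟙 _
  r := kappa
  fact _ := Category.id_comp _

/-- The functor `R : C² → C²` induced by a functorial factorisation. -/
@[reducible] def Rfun (F : Ff C) : Arrow C ⥤ Arrow C where
  obj f := Arrow.mk (F.r.app f)
  map {f g} sq := Arrow.homMk (u := F.E.map sq) (v := sq.right) (F.r.naturality sq)
  map_id f := by ext <;> simp <;> rfl
  map_comp sq sq' := by ext <;> simp <;> rfl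

/-- The tensor of functorial factorisations. -/
@[reducible] def tensor (F' F : Ff C) : Ff C where
  E := Rfun F ⋙ F'.E
  l :=
    { app := fun f => F.l.app f ≫ F'.l.app ((Rfun F).obj f)
      naturality := fun f g sq => by
        have h1 := F.l.naturality sq
        have h2 := F'.l.naturality ((Rfun F).map sq)
        dsimp at h1 h2 ⊢
        erw [← Category.assoc, h1, Category.assoc, Category.assoc]
        congr 1 }
  r :=
    { app := fun f => F'.r.app ((Rfun F).obj f)
      naturality := fun f g sq => F'.r.naturality ((Rfun F).map sq) }
  fact f := by
    dsimp
    erw [Category.assoc, F'.fact ((Rfun F).obj f)]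
    exact F.fact f

/-- The square between the `R`-images induced by a morphism of factorisations. -/
def rsq {A' B' : Ff C} (φ' : A' ⟶ B') (f : Arrow C) : (Rfun A').obj f ⟶ (Rfun B').obj f :=
  Arrow.homMk (u := φ'.1.app f) (v := 𝟙 f.right)
    (by
      dsimp [Rfun]
      erw [Category.comp_id, ← NatTrans.comp_app, φ'.2.2])

lemma rsq_nat {A' B' : Ff C} (φ' : A' ⟶ B') {f g : Arrow C} (sq : f ⟶ g) :
    (Rfun A').map sq ≫ rsq φ' g = rsq φ' f ≫ (Rfun B').map sq := by
  ext
  · exact φ'.1.naturality sq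
  · exact (Category.comp_id _).trans (Category.id_comp _).symm

/-- The tensor of morphisms of factorisations. -/
def tmap {A B A' B' : Ff C} (φ : A ⟶ B) (φ' : A' ⟶ B') : tensor A A' ⟶ tensor B B' :=
  ⟨{ app := fun f => A.E.map (rsq φ' f) ≫ φ.1.app ((Rfun B').obj f)
     naturality := fun f g sq => by
        dsimp [tensor]
        rw [← Category.assoc, ← A.E.map_comp, rsq_nat φ' sq, A.E.map_comp,
          Category.assoc, φ.1.naturality ((Rfun B').map sq), ← Category.assoc] },
   by
     ext f
     have h1 : φ'.1.app f ≫ A.l.app ((Rfun B').obj f)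
         = A.l.app ((Rfun A').obj f) ≫ A.E.map (rsq φ' f) := by
       exact A.l.naturality (rsq φ' f)
     have h2 : A'.l.app f ≫ φ'.1.app f = B'.l.app f := by
       simpa using congrArg (fun t => NatTrans.app t f) φ'.2.1
     have h3 : A.l.app ((Rfun B').obj f) ≫ φ.1.app ((Rfun B').obj f)
         = B.l.app ((Rfun B').obj f) := by
       simpa using congrArg (fun t => NatTrans.app t ((Rfun B').obj f)) φ.2.1
     dsimp [tensor]
     dsimp only [Arrow.leftFunc] at h1 h2 h3 ⊢
     simp only [Category.assoc]
     rw [← reassoc_of% h1, reassoc_of% h2, h3],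
   by
     ext f
     have h1 : φ.1.app ((Rfun B').obj f) ≫ B.r.app ((Rfun B').obj f)
         = A.r.app ((Rfun B').obj f) := by
       simpa using congrArg (fun t => NatTrans.app t ((Rfun B').obj f)) φ.2.2
     have h2 := A.r.naturality (rsq φ' f)
     rw [show Arrow.rightFunc.map (rsq φ' f) = 𝟙 f.right from rfl] at h2
     dsimp [tensor]
     erw [Category.assoc, h1, h2]
     exact Category.comp_id _⟩

lemma Ff.ext' {A B : Ff C} (hE : A.E = B.E)
    (hl : ∀ f, A.l.app f ≫ eqToHom (Functor.congr_obj hE f) = B.l.app f)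
    (hr : ∀ f, eqToHom (Functor.congr_obj hE f).symm ≫ A.r.app f = B.r.app f) : A = B := by
  obtain ⟨E, l, r, fa⟩ := A
  obtain ⟨E', l', r', fa'⟩ := B
  dsimp at hE
  subst hE
  obtain rfl : l = l' := by ext f; simpa using hl f
  obtain rfl : r = r' := by ext f; simpa using hr f
  rfl

lemma eqToHom_val_app {A B : Ff C} (p : A = B) (f : Arrow C) :
    (eqToHom p).1.app f = eqToHom (congrArg (fun X : Ff C => X.E.obj f) p) := by
  subst p; rfl

lemma comp_val_app {A B D : Ff C} (φ : A ⟶ B) (ψ : B ⟶ D) (f : Arrow C) :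
    (φ ≫ ψ).1.app f = φ.1.app f ≫ ψ.1.app f := rfl

lemma id_val_app (A : Ff C) (f : Arrow C) :
    (𝟙 A : A ⟶ A).1.app f = 𝟙 (A.E.obj f) := rfl

lemma rsq_id (A' : Ff C) (f : Arrow C) : rsq (𝟙 A') f = 𝟙 ((Rfun A').obj f) := rfl

lemma rsq_comp {A' B' D' : Ff C} (φ' : A' ⟶ B') (ψ' : B' ⟶ D') (f : Arrow C) :
    rsq (φ' ≫ ψ') f = rsq φ' f ≫ rsq ψ' f := by
  ext
  · rfl
  · exact (Category.id_comp _).symm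

/-- The strict monoidal structure on `Ff C`. -/
@[reducible] def ffMon : StrictMonoidalStruct (Ff C) where
  tObj A A' := tensor A A'
  tHom φ φ' := tmap φ φ'
  unit := ffUnit
  tHom_id A A' := by
    apply Subtype.ext
    ext f
    dsimp [tmap]
    rw [rsq_id, CategoryTheory.Functor.map_id, id_val_app, id_val_app]
    exact Category.id_comp _
  tHom_comp {A B D A' B' D'} φ ψ φ' ψ' := by
    apply Subtype.ext
    ext x
    dsimp [tmap]
    simp only [comp_val_app]
    erw [rsq_comp, Functor.map_comp, Category.assoc, Category.assoc]
    congr 1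
    rw [← Category.assoc, φ.1.naturality (rsq ψ' x), Category.assoc]
  assoc_obj A B D := by
    show tensor (tensor A B) D = tensor A (tensor B D)
    refine Ff.ext' rfl (fun f => ?_) (fun f => ?_)
    · show (D.l.app f ≫ B.l.app ((Rfun D).obj f) ≫ A.l.app ((Rfun B).obj ((Rfun D).obj f))) ≫
          𝟙 (A.E.obj ((Rfun B).obj ((Rfun D).obj f)))
        = (D.l.app f ≫ B.l.app ((Rfun D).obj f)) ≫ A.l.app ((Rfun B).obj ((Rfun D).obj f))
      simp
      erw [Category.assoc]
    · exact Category.id_comp _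
  unit_left A := by
    show tensor ffUnit A = A
    refine Ff.ext' rfl (fun f => ?_) (fun f => ?_)
    · show (A.l.app f ≫ 𝟙 (A.E.obj f)) ≫ 𝟙 (A.E.obj f) = A.l.app f
      simp
    · erw [eqToHom_refl, Category.id_comp]
      rfl
  unit_right A := by
    show tensor A ffUnit = A
    refine Ff.ext' rfl (fun f => ?_) (fun f => ?_)
    · show (𝟙 f.left ≫ A.l.app f) ≫ 𝟙 (A.E.obj f) = A.l.app f
      simp
      erw [Category.id_comp]
    · erw [eqToHom_refl, Category.id_comp]
      rfl
  assoc_hom {A B D A' B' D'} φ ψ χ := by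
    apply Subtype.ext
    ext x
    erw [comp_val_app, comp_val_app, eqToHom_val_app, eqToHom_val_app, eqToHom_refl,
      eqToHom_refl, Category.id_comp, Category.comp_id]
    have harr : (Rfun B).map (rsq χ x) ≫ rsq ψ ((Rfun D').obj x)
        = rsq (tmap ψ χ) x := by
      ext
      · dsimp [rsq, Rfun, tmap]
        rfl
      · dsimp [rsq, Rfun]
        exact Category.comp_id _
    dsimp [tmap, tensor]
    rw [← Category.assoc, ← A.E.map_comp, harr]
    rfl
  unit_left_hom {A A'} φ := by
    apply Subtype.ext
    ext x
    rw [comp_val_app, comp_val_app, eqToHom_val_app, eqToHom_val_app, eqToHom_refl,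
      eqToHom_refl, Category.id_comp, Category.comp_id]
    dsimp [tmap]
    rw [id_val_app, Category.comp_id]
    show (rsq φ x).left = _
    simp [rsq]
    rfl
  unit_right_hom {A A'} φ := by
    apply Subtype.ext
    ext x
    erw [comp_val_app, comp_val_app, eqToHom_val_app, eqToHom_val_app, eqToHom_refl,
      eqToHom_refl, Category.id_comp, Category.comp_id]
    dsimp [tmap]
    rw [rsq_id, CategoryTheory.Functor.map_id]
    exact Category.id_comp _

lemma ffMon_tensorSpec : TensorSpec (ffMon (C := C)) := by
  refine ⟨rfl, fun f => rfl, fun F' F f => rfl, fun F' F f => ?_, fun F' F f => ?_⟩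
  · erw [eqToHom_refl, Category.comp_id]
  · erw [eqToHom_refl, Category.id_comp]

lemma val_app_congr {A B : Ff C} {φ ψ : A ⟶ B} (h : φ = ψ) (f : Arrow C) :
    φ.1.app f = ψ.1.app f := by rw [h]

lemma rsq_left {A' B' : Ff C} (φ' : A' ⟶ B') (f : Arrow C) :
    (rsq φ' f).left = φ'.1.app f := rfl

lemma rsq_right {A' B' : Ff C} (φ' : A' ⟶ B') (f : Arrow C) :
    (rsq φ' f).right = 𝟙 f.right := rfl

lemma rsq_tmap {B D B' D' : Ff C} (ψ : B ⟶ B') (χ : D ⟶ D') (x : Arrow C) :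
    (Rfun B).map (rsq χ x) ≫ rsq ψ ((Rfun D').obj x) = rsq (tmap ψ χ) x := by
  ext
  · dsimp [rsq, Rfun, tmap]
    rfl
  · dsimp [rsq, Rfun]
    exact Category.comp_id _

lemma eta_val (X : MonIn (ffMon (C := C))) : X.eta.1 = X.A.l := by
  have h : (𝟙 (Arrow.leftFunc : Arrow C ⥤ C)) ≫ X.eta.1 = X.A.l := X.eta.2.1
  exact (Category.id_comp _).symm.trans h

lemma one_mul_app (X : MonIn (ffMon (C := C))) (f : Arrow C) :
    X.eta.1.app ((Rfun X.A).obj f) ≫ X.mu.1.app f = 𝟙 (X.A.E.obj f) := by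
  have hL : (ffMon.tHom X.eta (𝟙 X.A)).1.app f = X.eta.1.app ((Rfun X.A).obj f) :=
    Category.id_comp _
  have hR : (eqToHom (ffMon.unit_left X.A)).1.app f = 𝟙 (X.A.E.obj f) := by
    rw [eqToHom_val_app]; exact eqToHom_refl _ _
  have h := val_app_congr X.one_mul f
  rw [comp_val_app, hL, hR] at h
  exact h

lemma mul_one_app (X : MonIn (ffMon (C := C))) (f : Arrow C) :
    X.A.E.map (rsq X.eta f) ≫ X.mu.1.app f = 𝟙 (X.A.E.obj f) := by
  have hL : (ffMon.tHom (𝟙 X.A) X.eta).1.app f = X.A.E.map (rsq X.eta f) :=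
    Category.comp_id _
  have hR : (eqToHom (ffMon.unit_right X.A)).1.app f = 𝟙 (X.A.E.obj f) := by
    rw [eqToHom_val_app]; exact eqToHom_refl _ _
  have h := val_app_congr X.mul_one f
  rw [comp_val_app, hL, hR] at h
  exact h

lemma mul_assoc_app (X : MonIn (ffMon (C := C))) (f : Arrow C) :
    X.mu.1.app ((Rfun X.A).obj f) ≫ X.mu.1.app f
      = X.A.E.map (rsq X.mu f) ≫ X.mu.1.app f := by
  have hL : (ffMon.tHom X.mu (𝟙 X.A)).1.app f = X.mu.1.app ((Rfun X.A).obj f) := by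
    have h1 : (ffMon.tHom X.mu (𝟙 X.A)).1.app f
        = (tensor X.A X.A).E.map (rsq (𝟙 X.A) f) ≫ X.mu.1.app ((Rfun X.A).obj f) := rfl
    rw [h1, rsq_id, CategoryTheory.Functor.map_id]
    exact Category.id_comp _
  have hR : (ffMon.tHom (𝟙 X.A) X.mu).1.app f = X.A.E.map (rsq X.mu f) :=
    Category.comp_id _
  have hE : (eqToHom (ffMon.assoc_obj X.A X.A X.A)).1.app f
      = 𝟙 ((tensor (tensor X.A X.A) X.A).E.obj f) := by
    rw [eqToHom_val_app]; exact eqToHom_refl _ _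
  have h := val_app_congr X.mul_assoc f
  rw [comp_val_app, comp_val_app, comp_val_app, hL, hR, hE] at h
  erw [h]
  exact Category.id_comp _

/-- The monad on the arrow category induced by a monoid in `Ff C`. -/
def toMonad (X : MonIn (ffMon (C := C))) : Monad (Arrow C) where
  toFunctor := Rfun X.A
  η := { app := fun f => rsq X.eta f, naturality := fun _ _ sq => rsq_nat X.eta sq }
  μ := { app := fun f => rsq X.mu f, naturality := fun _ _ sq => rsq_nat X.mu sq }
  assoc f := by
    ext
    · show X.A.E.map (rsq X.mu f) ≫ X.mu.1.app f
        = X.mu.1.app ((Rfun X.A).obj f) ≫ X.mu.1.app f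
      exact (mul_assoc_app X f).symm
    · show 𝟙 f.right ≫ 𝟙 f.right = 𝟙 f.right ≫ 𝟙 f.right
      rfl
  left_unit f := by
    ext
    · show X.eta.1.app ((Rfun X.A).obj f) ≫ X.mu.1.app f = 𝟙 (X.A.E.obj f)
      exact one_mul_app X f
    · show 𝟙 f.right ≫ 𝟙 f.right = 𝟙 f.right
      simp
  right_unit f := by
    ext
    · show X.A.E.map (rsq X.eta f) ≫ X.mu.1.app f = 𝟙 (X.A.E.obj f)
      exact mul_one_app X f
    · show 𝟙 f.right ≫ 𝟙 f.right = 𝟙 f.right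
      simp

lemma toMonad_overCod (X : MonIn (ffMon (C := C))) : IsMonadOverCod (toMonad X) :=
  ⟨rfl, fun f => Eq.symm (eqToHom_refl _ _), fun f => Eq.symm (eqToHom_refl _ _)⟩

/-- The functor from monoids in `Ff C` to monads over `cod`. -/
def GFun : MonIn (ffMon (C := C)) ⥤
    ObjectProperty.FullSubcategory (fun R : Monad (Arrow C) => IsMonadOverCod R) where
  obj X := ⟨toMonad X, toMonad_overCod X⟩
  map {X Y} φ :=
    ⟨{ toNatTrans := { app := fun f => rsq φ.1 f, naturality := fun _ _ sq => rsq_nat φ.1 sq }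
       app_η := fun f => by
        show rsq X.eta f ≫ rsq φ.1 f = rsq Y.eta f
        rw [← rsq_comp, φ.2.1]
       app_μ := fun f => by
        show rsq X.mu f ≫ rsq φ.1 f
          = ((Rfun X.A).map (rsq φ.1 f) ≫ rsq φ.1 ((Rfun Y.A).obj f)) ≫ rsq Y.mu f
        have h22 : tmap φ.1 φ.1 ≫ Y.mu = X.mu ≫ φ.1 := φ.2.2
        rw [rsq_tmap, ← rsq_comp, ← h22, rsq_comp]
        rfl }⟩
  map_id X := by
    apply ObjectProperty.hom_ext
    apply MonadHom.ext
    funext f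
    rfl
  map_comp {X Y Z} φ ψ := by
    apply ObjectProperty.hom_ext
    apply MonadHom.ext
    funext f
    exact rsq_comp φ.1 ψ.1 f


lemma GFun_right_id {X Y : MonIn (ffMon (C := C))} (σ : GFun.obj X ⟶ GFun.obj Y)
    (f : Arrow C) : (σ.hom.toNatTrans.app f).right = 𝟙 f.right := by
  have h := congrArg CommaMorphism.right (σ.hom.app_η f)
  simp only [Arrow.comp_right] at h
  exact (Category.id_comp _).symm.trans h

/-- The underlying `Ff`-morphism of a monad morphism between induced monads. -/
def preim {X Y : MonIn (ffMon (C := C))} (σ : GFun.obj X ⟶ GFun.obj Y) : X.A ⟶ Y.A :=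
  ⟨{ app := fun f => (σ.hom.toNatTrans.app f).left
     naturality := fun f g sq => by
       have h := congrArg CommaMorphism.left (σ.hom.toNatTrans.naturality sq)
       simp only [Arrow.comp_left] at h
       exact h },
   by
     ext f
     have h := congrArg CommaMorphism.left (σ.hom.app_η f)
     simp only [Arrow.comp_left] at h
     show X.A.l.app f ≫ (σ.hom.toNatTrans.app f).left = Y.A.l.app f
     have e1 := NatTrans.congr_app (eta_val X) f
     have e2 := NatTrans.congr_app (eta_val Y) f
     rw [← e1, ← e2]
     exact h,
   by
     ext f
     show (σ.hom.toNatTrans.app f).left ≫ ((Rfun Y.A).obj f).hom = X.A.r.app f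
     have h' : (σ.hom.toNatTrans.app f).left ≫ ((Rfun Y.A).obj f).hom
         = ((Rfun X.A).obj f).hom ≫ (σ.hom.toNatTrans.app f).right := Arrow.w _
     rw [h', GFun_right_id σ f]
     exact Category.comp_id _⟩

lemma preim_rsq {X Y : MonIn (ffMon (C := C))} (σ : GFun.obj X ⟶ GFun.obj Y)
    (f : Arrow C) : rsq (preim σ) f = σ.hom.toNatTrans.app f := by
  ext
  · rfl
  · exact (GFun_right_id σ f).symm

lemma GFun_full : (GFun (C := C)).Full where
  map_surjective {X Y} σ := by
    have cμ : ffMon.tHom (preim σ) (preim σ) ≫ Y.mu = X.mu ≫ preim σ := by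
      apply Subtype.ext
      ext f
      have h := congrArg CommaMorphism.left (σ.hom.app_μ f)
      simp only [Arrow.comp_left] at h
      show (tmap (preim σ) (preim σ)).1.app f ≫ Y.mu.1.app f
        = X.mu.1.app f ≫ (preim σ).1.app f
      have h1 : (tmap (preim σ) (preim σ)).1.app f
          = X.A.E.map (rsq (preim σ) f) ≫ (preim σ).1.app ((Rfun Y.A).obj f) := rfl
      rw [h1, preim_rsq]
      exact h.symm
    refine ⟨⟨preim σ, ?_, cμ⟩, ?_⟩
    · apply Subtype.ext
      ext f
      have h := congrArg CommaMorphism.left (σ.hom.app_η f)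
      simp only [Arrow.comp_left] at h
      exact h
    · apply ObjectProperty.hom_ext
      apply MonadHom.ext
      funext f
      exact preim_rsq σ f

lemma GFun_faithful : (GFun (C := C)).Faithful where
  map_injective {X Y} {φ ψ} h := by
    apply Subtype.ext
    apply Subtype.ext
    ext f
    exact congrArg (fun σ : GFun.obj X ⟶ GFun.obj Y => (σ.hom.toNatTrans.app f).left) h

lemma eqToHom_chain5 {X₁ X₂ X₃ X₄ X₅ X₆ : C} (p₁ : X₁ = X₂) (p₂ : X₂ = X₃) (p₃ : X₃ = X₄)
    (p₄ : X₄ = X₅) (p₅ : X₅ = X₆) (p : X₁ = X₆) :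
    (eqToHom p₁ ≫ eqToHom p₂ ≫ eqToHom p₃) ≫ eqToHom p₄ ≫ eqToHom p₅ = eqToHom p := by
  subst p₁ p₂ p₃ p₄ p₅
  simp

lemma eqToHom_chain5' {X₁ X₂ X₃ X₄ X₅ X₆ : C} (p₁ : X₁ = X₂) (p₂ : X₂ = X₃) (p₃ : X₃ = X₄)
    (p₄ : X₄ = X₅) (p₅ : X₅ = X₆) (p : X₁ = X₆) :
    eqToHom p₁ ≫ (eqToHom p₂ ≫ eqToHom p₃ ≫ eqToHom p₄) ≫ eqToHom p₅ = 𝟙 X₁ ≫ eqToHom p := by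
  subst p₁ p₂ p₃ p₄ p₅
  simp

section OfMonad

lemma eR (R : Monad (Arrow C))
    (h : R.toFunctor ⋙ Arrow.rightFunc = (Arrow.rightFunc : Arrow C ⥤ C))
    (f : Arrow C) : (R.obj f).right = f.right := Functor.congr_obj h f

lemma R_map_right (R : Monad (Arrow C))
    (h : R.toFunctor ⋙ Arrow.rightFunc = (Arrow.rightFunc : Arrow C ⥤ C))
    {f g : Arrow C} (sq : f ⟶ g) :
    (R.map sq).right = eqToHom (eR R h f) ≫ sq.right ≫ eqToHom (eR R h g).symm := by
  have hc := Functor.congr_hom h sq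
  dsimp only [Arrow.rightFunc_map, Arrow.rightFunc_obj, Functor.comp_map, Functor.comp_obj] at hc
  exact hc

/-- The functorial factorisation induced by a monad over `cod`. -/
@[reducible] def ffOf (R : Monad (Arrow C))
    (h : R.toFunctor ⋙ Arrow.rightFunc = (Arrow.rightFunc : Arrow C ⥤ C))
    (hη : ∀ f : Arrow C, (R.η.app f).right = eqToHom ((Functor.congr_obj h f).symm)) :
    Ff C where
  E := R.toFunctor ⋙ Comma.fst _ _
  l :=
    { app := fun f => (R.η.app f).left
      naturality := fun f g sq => by
        have hc := congrArg CommaMorphism.left (R.η.naturality sq)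
        simp only [Arrow.comp_left] at hc
        exact hc }
  r :=
    { app := fun f => (R.obj f).hom ≫ eqToHom (eR R h f)
      naturality := fun f g sq => by
        have hw : (R.map sq).left ≫ (R.obj g).hom = (R.obj f).hom ≫ (R.map sq).right :=
          Arrow.w _
        show (R.map sq).left ≫ (R.obj g).hom ≫ eqToHom (eR R h g)
          = ((R.obj f).hom ≫ eqToHom (eR R h f)) ≫ sq.right
        rw [← Category.assoc, hw, R_map_right R h sq]
        simp }
  fact f := by
    have hw : (R.η.app f).left ≫ (R.obj f).hom = f.hom ≫ (R.η.app f).right := Arrow.w _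
    show (R.η.app f).left ≫ (R.obj f).hom ≫ eqToHom (eR R h f) = f.hom
    rw [← Category.assoc, hw, hη f]
    erw [Category.assoc, eqToHom_trans, eqToHom_refl, Category.comp_id]

variable (R : Monad (Arrow C))
  (h : R.toFunctor ⋙ Arrow.rightFunc = (Arrow.rightFunc : Arrow C ⥤ C))
  (hη : ∀ f : Arrow C, (R.η.app f).right = eqToHom ((Functor.congr_obj h f).symm))
  (hμ : ∀ f : Arrow C, (R.μ.app f).right = eqToHom (Functor.congr_obj h (R.obj f)))

/-- The comparison morphism `R_A f ⟶ R f`. -/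
def jhom (f : Arrow C) : (Rfun (ffOf R h hη)).obj f ⟶ R.obj f :=
  Arrow.homMk (u := 𝟙 ((R.obj f).left)) (v := eqToHom (eR R h f).symm)
    (by
      show 𝟙 ((R.obj f).left) ≫ (R.obj f).hom
        = ((R.obj f).hom ≫ eqToHom (eR R h f)) ≫ eqToHom (eR R h f).symm
      simp)

/-- The comparison morphism `R f ⟶ R_A f`. -/
def jinv (f : Arrow C) : R.obj f ⟶ (Rfun (ffOf R h hη)).obj f :=
  Arrow.homMk (u := 𝟙 ((R.obj f).left)) (v := eqToHom (eR R h f))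
    (by
      show 𝟙 ((R.obj f).left) ≫ ((R.obj f).hom ≫ eqToHom (eR R h f))
        = (R.obj f).hom ≫ eqToHom (eR R h f)
      simp)

lemma jhom_left (f : Arrow C) : (jhom R h hη f).left = 𝟙 ((R.obj f).left) := rfl

lemma jhom_right (f : Arrow C) : (jhom R h hη f).right = eqToHom (eR R h f).symm := rfl

lemma jnat {f g : Arrow C} (sq : f ⟶ g) :
    (Rfun (ffOf R h hη)).map sq ≫ jhom R h hη g = jhom R h hη f ≫ R.map sq := by
  ext
  · show (R.map sq).left ≫ 𝟙 ((R.obj g).left)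
      = 𝟙 ((R.obj f).left) ≫ (R.map sq).left
    simp
  · show sq.right ≫ eqToHom (eR R h g).symm
      = eqToHom (eR R h f).symm ≫ (R.map sq).right
    rw [R_map_right R h sq]
    simp

/-- Component of the multiplication on the induced factorisation. -/
def muApp (f : Arrow C) :
    (ffOf R h hη).E.obj ((Rfun (ffOf R h hη)).obj f) ⟶ (ffOf R h hη).E.obj f :=
  (R.map (jhom R h hη f)).left ≫ (R.μ.app f).left

lemma etaMu (f : Arrow C) :
    (R.η.app ((Rfun (ffOf R h hη)).obj f)).left ≫ muApp R h hη f
      = 𝟙 ((R.obj f).left) := by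
  have hn' : (R.η.app ((Rfun (ffOf R h hη)).obj f)).left ≫ (R.map (jhom R h hη f)).left
      = (R.η.app (R.obj f)).left := by
    have hc := congrArg CommaMorphism.left (R.η.naturality (jhom R h hη f))
    simp only [Arrow.comp_left] at hc
    have hid : (R.η.app (R.obj f)).left
        = ((𝟭 (Arrow C)).map (jhom R h hη f)).left ≫ (R.η.app (R.obj f)).left :=
      (Category.id_comp _).symm
    exact (hid.trans hc).symm
  have hl : (R.η.app (R.obj f)).left ≫ (R.μ.app f).left = 𝟙 ((R.obj f).left) := by
    have hc := congrArg CommaMorphism.left (R.left_unit f)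
    simp only [Arrow.comp_left] at hc
    exact hc
  show (R.η.app ((Rfun (ffOf R h hη)).obj f)).left
      ≫ (R.map (jhom R h hη f)).left ≫ (R.μ.app f).left = 𝟙 ((R.obj f).left)
  rw [← Category.assoc, hn']
  exact hl

/-- The unit of the induced monoid. -/
def etaOf : (ffUnit : Ff C) ⟶ ffOf R h hη :=
  ⟨(ffOf R h hη).l, Category.id_comp _, by
    ext f
    exact (ffOf R h hη).fact f⟩

lemma rsq_eta_jhom (f : Arrow C) :
    rsq (etaOf R h hη) f ≫ jhom R h hη f = R.η.app f := by
  ext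
  · show (R.η.app f).left ≫ 𝟙 ((R.obj f).left) = (R.η.app f).left
    exact Category.comp_id _
  · show 𝟙 f.right ≫ eqToHom (eR R h f).symm = (R.η.app f).right
    rw [hη f]
    simp
    rfl

lemma etaMu' (f : Arrow C) :
    (ffOf R h hη).E.map (rsq (etaOf R h hη) f) ≫ muApp R h hη f
      = 𝟙 ((R.obj f).left) := by
  have m : (ffOf R h hη).E.map (rsq (etaOf R h hη) f) ≫ (R.map (jhom R h hη f)).left
      = (R.map (R.η.app f)).left := by
    have hc := congrArg (fun t => (R.map t).left) (rsq_eta_jhom R h hη f)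
    simp only [CategoryTheory.Functor.map_comp, Arrow.comp_left] at hc
    exact hc
  have hr : (R.map (R.η.app f)).left ≫ (R.μ.app f).left = 𝟙 ((R.obj f).left) := by
    have hc := congrArg CommaMorphism.left (R.right_unit f)
    simp only [Arrow.comp_left] at hc
    exact hc
  show (ffOf R h hη).E.map (rsq (etaOf R h hη) f)
      ≫ (R.map (jhom R h hη f)).left ≫ (R.μ.app f).left = 𝟙 ((R.obj f).left)
  rw [← Category.assoc, m]
  exact hr

/-- The multiplication of the induced monoid. -/
def muOf : tensor (ffOf R h hη) (ffOf R h hη) ⟶ ffOf R h hη :=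
  ⟨{ app := fun f => muApp R h hη f
     naturality := fun f g sq => by
       show (R.map ((Rfun (ffOf R h hη)).map sq)).left
           ≫ (R.map (jhom R h hη g)).left ≫ (R.μ.app g).left
         = ((R.map (jhom R h hη f)).left ≫ (R.μ.app f).left) ≫ (R.map sq).left
       have e1 : (R.map ((Rfun (ffOf R h hη)).map sq)).left ≫ (R.map (jhom R h hη g)).left
           = (R.map (jhom R h hη f)).left ≫ (R.map (R.map sq)).left := by
         have hc := congrArg (fun t => (R.map t).left) (jnat R h hη sq)
         simp only [CategoryTheory.Functor.map_comp, Arrow.comp_left] at hc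
         exact hc
       have e2 : (R.map (R.map sq)).left ≫ (R.μ.app g).left
           = (R.μ.app f).left ≫ (R.map sq).left := by
         have hc := congrArg CommaMorphism.left (R.μ.naturality sq)
         simp only [Arrow.comp_left] at hc
         exact hc
       rw [← Category.assoc, e1, Category.assoc, e2, ← Category.assoc] },
   by
     ext f
     show ((R.η.app f).left ≫ (R.η.app ((Rfun (ffOf R h hη)).obj f)).left)
         ≫ muApp R h hη f = (R.η.app f).left
     rw [Category.assoc, etaMu]
     exact Category.comp_id _,
   by
     ext f
     have w1 : (R.map (jhom R h hη f)).left ≫ (R.obj (R.obj f)).hom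
         = (R.obj ((Rfun (ffOf R h hη)).obj f)).hom ≫ (R.map (jhom R h hη f)).right :=
       Arrow.w _
     have w2 : (R.μ.app f).left ≫ (R.obj f).hom
         = (R.obj (R.obj f)).hom ≫ (R.μ.app f).right := Arrow.w _
     show ((R.map (jhom R h hη f)).left ≫ (R.μ.app f).left)
         ≫ (R.obj f).hom ≫ eqToHom (eR R h f)
       = (R.obj ((Rfun (ffOf R h hη)).obj f)).hom
         ≫ eqToHom (eR R h ((Rfun (ffOf R h hη)).obj f))
     rw [Category.assoc, reassoc_of% w2, reassoc_of% w1,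
       R_map_right R h (jhom R h hη f), jhom_right, hμ f]
     exact congrArg (fun t => _ ≫ t) (eqToHom_chain5 _ _ _ _ _ _)⟩

lemma jhom_mu_comm (f : Arrow C) :
    jhom R h hη ((Rfun (ffOf R h hη)).obj f) ≫ R.map (jhom R h hη f) ≫ R.μ.app f
      = rsq (muOf R h hη hμ) f ≫ jhom R h hη f := by
  ext
  · show 𝟙 ((R.obj ((Rfun (ffOf R h hη)).obj f)).left)
        ≫ (R.map (jhom R h hη f)).left ≫ (R.μ.app f).left
      = muApp R h hη f ≫ 𝟙 ((R.obj f).left)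
    rw [Category.id_comp]
    exact (Category.comp_id _).symm
  · show eqToHom (eR R h ((Rfun (ffOf R h hη)).obj f)).symm
        ≫ (R.map (jhom R h hη f)).right ≫ (R.μ.app f).right
      = 𝟙 f.right ≫ eqToHom (eR R h f).symm
    rw [R_map_right R h (jhom R h hη f), jhom_right, hμ f]
    exact eqToHom_chain5' _ _ _ _ _ _

/-- The monoid in `Ff C` induced by a monad over `cod`. -/
def monOf : MonIn (ffMon (C := C)) where
  A := ffOf R h hη
  eta := etaOf R h hη
  mu := muOf R h hη hμ
  one_mul := by
    apply Subtype.ext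
    ext f
    rw [comp_val_app]
    have hL : (ffMon.tHom (etaOf R h hη) (𝟙 (ffOf R h hη))).1.app f
        = (ffOf R h hη).l.app ((Rfun (ffOf R h hη)).obj f) := Category.id_comp _
    rw [hL, eqToHom_val_app]
    exact (etaMu R h hη f).trans (Eq.symm (eqToHom_refl _ _))
  mul_one := by
    apply Subtype.ext
    ext f
    rw [comp_val_app]
    have hL : (ffMon.tHom (𝟙 (ffOf R h hη)) (etaOf R h hη)).1.app f
        = (ffOf R h hη).E.map (rsq (etaOf R h hη) f) := Category.comp_id _
    rw [hL, eqToHom_val_app]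
    exact (etaMu' R h hη f).trans (Eq.symm (eqToHom_refl _ _))
  mul_assoc := by
    apply Subtype.ext
    ext f
    rw [comp_val_app, comp_val_app, comp_val_app]
    have hL : (ffMon.tHom (muOf R h hη hμ) (𝟙 (ffOf R h hη))).1.app f
        = muApp R h hη ((Rfun (ffOf R h hη)).obj f) := by
      have h1 : (ffMon.tHom (muOf R h hη hμ) (𝟙 (ffOf R h hη))).1.app f
          = (tensor (ffOf R h hη) (ffOf R h hη)).E.map (rsq (𝟙 (ffOf R h hη)) f)
            ≫ (muOf R h hη hμ).1.app ((Rfun (ffOf R h hη)).obj f) := rfl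
      rw [h1, rsq_id, CategoryTheory.Functor.map_id]
      exact Category.id_comp _
    have hR : (ffMon.tHom (𝟙 (ffOf R h hη)) (muOf R h hη hμ)).1.app f
        = (ffOf R h hη).E.map (rsq (muOf R h hη hμ) f) := Category.comp_id _
    have hE : (eqToHom (ffMon.assoc_obj (ffOf R h hη) (ffOf R h hη) (ffOf R h hη))).1.app f
        = 𝟙 ((tensor (tensor (ffOf R h hη) (ffOf R h hη)) (ffOf R h hη)).E.obj f) := by
      rw [eqToHom_val_app]; exact eqToHom_refl _ _
    rw [hL, hR, hE]
    have n1 : (R.μ.app ((Rfun (ffOf R h hη)).obj f)).left ≫ (R.map (jhom R h hη f)).left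
        = (R.map (R.map (jhom R h hη f))).left ≫ (R.μ.app (R.obj f)).left := by
      have hc := congrArg CommaMorphism.left (R.μ.naturality (jhom R h hη f))
      simp only [Arrow.comp_left] at hc
      exact hc.symm
    have n2 : (R.μ.app (R.obj f)).left ≫ (R.μ.app f).left
        = (R.map (R.μ.app f)).left ≫ (R.μ.app f).left := by
      have hc := congrArg CommaMorphism.left (R.assoc f)
      simp only [Arrow.comp_left] at hc
      exact hc.symm
    have m1 : (R.map (jhom R h hη ((Rfun (ffOf R h hη)).obj f))).left
          ≫ (R.map (R.map (jhom R h hη f))).left ≫ (R.map (R.μ.app f)).left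
        = (R.map (rsq (muOf R h hη hμ) f)).left ≫ (R.map (jhom R h hη f)).left := by
      have hc := congrArg (fun t => (R.map t).left) (jhom_mu_comm R h hη hμ f)
      erw [CategoryTheory.Functor.map_comp, CategoryTheory.Functor.map_comp,
        CategoryTheory.Functor.map_comp] at hc
      exact hc
    show muApp R h hη ((Rfun (ffOf R h hη)).obj f) ≫ muApp R h hη f
      = 𝟙 ((tensor (tensor (ffOf R h hη) (ffOf R h hη)) (ffOf R h hη)).E.obj f)
        ≫ (ffOf R h hη).E.map (rsq (muOf R h hη hμ) f) ≫ muApp R h hη f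
    simp only [muApp, Category.assoc]
    rw [reassoc_of% n1, n2, reassoc_of% m1]
    exact (Category.assoc _ _ _).trans (Category.id_comp _).symm

/-- The comparison isomorphism of monads. -/
def monadIso : toMonad (monOf R h hη hμ) ≅ R :=
  MonadIso.mk
    (NatIso.ofComponents
      (fun f => ⟨jhom R h hη f, jinv R h hη f,
        by
          ext
          · show 𝟙 ((R.obj f).left) ≫ 𝟙 ((R.obj f).left) = 𝟙 ((R.obj f).left)
            simp
          · show eqToHom (eR R h f).symm ≫ eqToHom (eR R h f) = 𝟙 f.right
            simp,
        by
          ext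
          · show 𝟙 ((R.obj f).left) ≫ 𝟙 ((R.obj f).left) = 𝟙 ((R.obj f).left)
            simp
          · show eqToHom (eR R h f) ≫ eqToHom (eR R h f).symm = 𝟙 ((R.obj f).right)
            simp⟩)
      (fun sq => jnat R h hη sq))
    (fun f => rsq_eta_jhom R h hη f)
    (fun f => by
      show rsq (muOf R h hη hμ) f ≫ jhom R h hη f
        = ((Rfun (ffOf R h hη)).map (jhom R h hη f) ≫ jhom R h hη (R.obj f))
          ≫ R.μ.app f
      rw [jnat R h hη (jhom R h hη f), Category.assoc, jhom_mu_comm R h hη hμ f])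

end OfMonad

lemma GFun_essSurj : (GFun (C := C)).EssSurj where
  mem_essImage Y := by
    obtain ⟨R, hY⟩ := Y
    obtain ⟨h, hη, hμ⟩ := hY
    refine ⟨monOf R h hη hμ, ⟨?_⟩⟩
    exact ⟨⟨(monadIso R h hη hμ).hom⟩, ⟨(monadIso R h hη hμ).inv⟩,
      InducedCategory.hom_ext (monadIso R h hη hμ).hom_inv_id,
      InducedCategory.hom_ext (monadIso R h hη hμ).inv_hom_id⟩

end FfAux

/-- `Ff C` carries a strict monoidal structure `(⊗, I)` (composing factorisations
by refactorising the right half) whose monoid objects correspond precisely to monads over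
`cod` on the arrow category of `C`. -/
theorem stmt5 :
    ∃ M : StrictMonoidalStruct (Ff C), TensorSpec M ∧
      Nonempty (MonIn M ≌ ObjectProperty.FullSubcategory (fun R : Monad (Arrow C) => IsMonadOverCod R)) := by
  refine ⟨FfAux.ffMon, FfAux.ffMon_tensorSpec, ?_⟩
  haveI := FfAux.GFun_faithful (C := C)
  haveI := FfAux.GFun_full (C := C)
  haveI := FfAux.GFun_essSurj (C := C)
  haveI : (FfAux.GFun (C := C)).IsEquivalence := {}
  exact ⟨(FfAux.GFun (C := C)).asEquivalence⟩
end

section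
/- Let (T, τ) be a pointed endofunctor on a category K (an endofunctor T with a natural transformation τ : id ⇒ T). If the forgetful functor U : T-Alg → K from the category of algebras for the pointed endofunctor has a left adjoint F, then the monad generated by the adjunction F ⊣ U has category of Eilenberg–Moore algebras isomorphic, over K, to T-Alg. -/
open CategoryTheory CategoryTheory.Limits

universe v u

variable {K : Type u} [Category.{v} K]

/-- The category of algebras for a pointed endofunctor `(T, τ)`: objects are pairs
`(X, x : TX ⟶ X)` with `x ∘ τ_X = id`, morphisms are maps commuting with the structure
maps. -/
structure PAlg (T : K ⥤ K) (τ : 𝟭 K ⟶ T) where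
  X : K
  a : T.obj X ⟶ X
  unit : τ.app X ≫ a = 𝟙 X

instance (T : K ⥤ K) (τ : 𝟭 K ⟶ T) : Category (PAlg T τ) where
  Hom A B := { f : A.X ⟶ B.X // T.map f ≫ B.a = A.a ≫ f }
  id A := ⟨𝟙 A.X, by simp⟩
  comp f g := ⟨f.1 ≫ g.1, by
    rw [T.map_comp, Category.assoc, g.2, ← Category.assoc, f.2, Category.assoc]⟩
  id_comp f := Subtype.ext (Category.id_comp f.1)
  comp_id f := Subtype.ext (Category.comp_id f.1)
  assoc f g h := Subtype.ext (Category.assoc f.1 g.1 h.1)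

/-- The forgetful functor from algebras for a pointed endofunctor to the base category. -/
def PAlg.forget (T : K ⥤ K) (τ : 𝟭 K ⟶ T) : PAlg T τ ⥤ K where
  obj A := A.X
  map f := f.1

/-!
Through the map of pointed endofunctors `Tη ≫ a_F : T ⟶ UF`, every Eilenberg–Moore algebra
`α : UFA ⟶ A` becomes a `T`-algebra on `A`, and `α` is then itself a `T`-algebra map `FA ⟶ A`
with `η ≫ α = 𝟙`, i.e. the transpose of the identity. So `α` is recovered from the `T`-algebra,
which makes the functor to `T`-algebras fully faithful; it is essentially surjective because a
`T`-algebra `B` is recovered from the Eilenberg–Moore algebra `U ε_B`, and it lies strictly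
over `K`.
-/

namespace PAlg

variable {T : K ⥤ K} {τ : 𝟭 K ⟶ T}

lemma hom_comm {A B : PAlg T τ} (f : A ⟶ B) :
    T.map ((PAlg.forget T τ).map f) ≫ B.a = A.a ≫ (PAlg.forget T τ).map f :=
  f.2

lemma point_app_comp_map_comp_a {X : K} (A : PAlg T τ) (f : X ⟶ A.X) :
    τ.app X ≫ T.map f ≫ A.a = f := by
  rw [← τ.naturality_assoc, A.unit]
  simp

variable {F : K ⥤ PAlg T τ} (adj : F ⊣ PAlg.forget T τ)

lemma hom_ext_of_unit_comp {X : K} {B : PAlg T τ} {f g : F.obj X ⟶ B}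
    (h : adj.unit.app X ≫ (PAlg.forget T τ).map f = adj.unit.app X ≫ (PAlg.forget T τ).map g) :
    f = g :=
  (adj.homEquiv X B).injective h

-- `erw` is needed below because `(PAlg.forget T τ).obj A` and `A.X` agree only after
-- unfolding `PAlg.forget`.
def toAlgebraicallyFreeMonad : T ⟶ (adj.toMonad : K ⥤ K) where
  app X := T.map (adj.unit.app X) ≫ (F.obj X).a
  naturality X Y f := by
    have hη : f ≫ adj.unit.app Y = adj.unit.app X ≫ (PAlg.forget T τ).map (F.map f) :=
      adj.unit.naturality f
    erw [← T.map_comp_assoc, hη, T.map_comp, Category.assoc, hom_comm]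
    exact (Category.assoc _ _ _).symm

lemma point_app_comp_toAlgebraicallyFreeMonad_app (X : K) :
    τ.app X ≫ (toAlgebraicallyFreeMonad adj).app X = adj.unit.app X :=
  point_app_comp_map_comp_a (F.obj X) _

lemma toAlgebraicallyFreeMonad_app_comp_counit (B : PAlg T τ) :
    (toAlgebraicallyFreeMonad adj).app B.X ≫ (PAlg.forget T τ).map (adj.counit.app B) = B.a := by
  erw [Category.assoc, ← hom_comm (adj.counit.app B), ← T.map_comp_assoc,
    adj.right_triangle_components, T.map_id, Category.id_comp]
  rfl

lemma map_a_comp_toAlgebraicallyFreeMonad_app_comp_a (A : adj.toMonad.Algebra) :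
    T.map A.a ≫ (toAlgebraicallyFreeMonad adj).app A.A ≫ A.a = (F.obj A.A).a ≫ A.a := by
  erw [(toAlgebraicallyFreeMonad adj).naturality_assoc, ← A.assoc, ← Category.assoc,
    toAlgebraicallyFreeMonad_app_comp_counit adj (F.obj A.A)]
  rfl

def ofMonadAlgebra : adj.toMonad.Algebra ⥤ PAlg T τ where
  obj A :=
    { X := A.A
      a := (toAlgebraicallyFreeMonad adj).app A.A ≫ A.a
      unit := by
        rw [← Category.assoc, point_app_comp_toAlgebraicallyFreeMonad_app]
        exact A.unit }
  map {A B} f := ⟨f.f, by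
    erw [(toAlgebraicallyFreeMonad adj).naturality_assoc, f.h]
    exact (Category.assoc _ _ _).symm⟩

def structureHom (A : adj.toMonad.Algebra) : F.obj A.A ⟶ (ofMonadAlgebra adj).obj A :=
  ⟨A.a, map_a_comp_toAlgebraicallyFreeMonad_app_comp_a adj A⟩

-- Both sides are transposes of `g`, as the structure maps are retractions of the unit.
lemma map_comp_structureHom {A B : adj.toMonad.Algebra}
    (g : (ofMonadAlgebra adj).obj A ⟶ (ofMonadAlgebra adj).obj B) :
    F.map ((PAlg.forget T τ).map g) ≫ structureHom adj B = structureHom adj A ≫ g := by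
  apply hom_ext_of_unit_comp adj
  erw [Functor.map_comp, Functor.map_comp, ← adj.unit.naturality_assoc, B.unit,
    ← Category.assoc, A.unit, Functor.id_map, Category.comp_id, Category.id_comp]

instance : (ofMonadAlgebra adj).Faithful where
  map_injective h := Monad.Algebra.Hom.ext (congrArg Subtype.val h)

instance : (ofMonadAlgebra adj).Full where
  map_surjective g :=
    ⟨⟨(PAlg.forget T τ).map g, congrArg (PAlg.forget T τ).map (map_comp_structureHom adj g)⟩, rfl⟩

lemma ofMonadAlgebra_obj_comparison_obj (B : PAlg T τ) :
    (ofMonadAlgebra adj).obj ((Monad.comparison adj).obj B) = B := by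
  have ha := toAlgebraicallyFreeMonad_app_comp_counit adj B
  obtain ⟨X, a, unit⟩ := B
  change PAlg.mk X (_ ≫ _) _ = PAlg.mk X a unit
  congr 1

instance : (ofMonadAlgebra adj).EssSurj where
  mem_essImage B := ⟨_, ⟨eqToIso (ofMonadAlgebra_obj_comparison_obj adj B)⟩⟩

end PAlg

/-- if the forgetful functor `U : T-Alg → K` from the category of algebras for
a pointed endofunctor `(T, τ)` has a left adjoint `F`, then the category of
Eilenberg–Moore algebras of the monad generated by the adjunction `F ⊣ U` (the
algebraically-free monad on `(T, τ)`) is isomorphic over `K` to `T-Alg`. -/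
theorem stmt9 (T : K ⥤ K) (τ : 𝟭 K ⟶ T) (F : K ⥤ PAlg T τ)
    (adj : F ⊣ PAlg.forget T τ) :
    ∃ e : adj.toMonad.Algebra ≌ PAlg T τ,
      e.functor ⋙ PAlg.forget T τ = adj.toMonad.forget := by
  have : (PAlg.ofMonadAlgebra adj).IsEquivalence := { }
  exact ⟨(PAlg.ofMonadAlgebra adj).asEquivalence, rfl⟩
end

section
/- In the category Set, let L¹ be the one-step comonad generated by J = {∅ → 1}: its functorial factorisation sends g : X → Y to X → X + Y → Y with left part the coproduct injection and right part ⟨g, id⟩, with comultiplication σ¹_g = ⟨in₁, in₃⟩ : X + Y → X + (X + Y). Then a function f : X → Y admits an L¹-coalgebra structure if and only if f is injective, and when it does the coalgebra structure is unique. -/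
/-- in `Set` with `J = {∅ → 1}`, the one-step comonad has factorisation
`X → X ⊕ Y → Y` with `λ¹_f = inl`, `ρ¹_f = ⟨f, id⟩` and comultiplication
`σ¹_f = ⟨in₁, in₃⟩`.  A function `f : X → Y` admits an `L¹`-coalgebra structure
(`s : Y → X ⊕ Y` with `s ∘ f = λ¹_f`, `ρ¹_f ∘ s = id` and `σ¹_f ∘ s = E¹(1, s) ∘ s`)
iff `f` is injective, and such a structure is unique when it exists. -/
theorem stmt14 {X Y : Type u} (f : X → Y) :
    ((∃ s : Y → X ⊕ Y,
        (∀ x, s (f x) = Sum.inl x) ∧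
        (∀ y, Sum.elim f id (s y) = y) ∧
        (∀ y, Sum.elim (Sum.inl) (fun y' => Sum.inr (Sum.inr y')) (s y) =
          Sum.map id s (s y))) ↔ Function.Injective f) ∧
    (∀ s s' : Y → X ⊕ Y,
      ((∀ x, s (f x) = Sum.inl x) ∧ (∀ y, Sum.elim f id (s y) = y) ∧
        (∀ y, Sum.elim (Sum.inl) (fun y' => Sum.inr (Sum.inr y')) (s y) =
          Sum.map id s (s y))) →
      ((∀ x, s' (f x) = Sum.inl x) ∧ (∀ y, Sum.elim f id (s' y) = y) ∧
        (∀ y, Sum.elim (Sum.inl) (fun y' => Sum.inr (Sum.inr y')) (s' y) =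
          Sum.map id s' (s' y))) →
      s = s') := by
  constructor
  · constructor
    · rintro ⟨s, h1, _, _⟩ x x' hxx'
      have : s (f x) = s (f x') := by rw [hxx']
      rw [h1, h1] at this
      exact Sum.inl.inj this
    · intro hf
      classical
      refine ⟨fun y => if h : ∃ x, f x = y then Sum.inl h.choose else Sum.inr y, ?_, ?_, ?_⟩
      · intro x
        have h : ∃ x', f x' = f x := ⟨x, rfl⟩
        simp only [dif_pos h]
        exact congrArg Sum.inl (hf h.choose_spec)
      · intro y
        by_cases h : ∃ x, f x = y
        · simp only [dif_pos h, Sum.elim_inl]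
          exact h.choose_spec
        · simp [dif_neg h]
      · intro y
        by_cases h : ∃ x, f x = y
        · simp [dif_pos h]
        · simp [dif_neg h]
  · rintro s s' ⟨h1, h2, h3⟩ ⟨h1', h2', h3'⟩
    funext y
    rcases hy : s y with x | y₁
    · have hfx : f x = y := by have := h2 y; rwa [hy, Sum.elim_inl] at this
      rw [← hfx, h1']
    · have hy1 : y₁ = y := by have := h2 y; rwa [hy, Sum.elim_inr, id] at this
      rcases hy' : s' y with x' | y₂
      · have hfx' : f x' = y := by have := h2' y; rwa [hy', Sum.elim_inl] at this
        have h := h1 x'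
        rw [hfx', hy] at h
        exact absurd h (by simp)
      · have hy2 : y₂ = y := by have := h2' y; rwa [hy', Sum.elim_inr, id] at this
        rw [hy1, hy2]
end

section
/- Let (L, R, Δ) be a natural weak factorisation system on C. Given L-coalgebras (f, s) : X → Y and (g, t) : Y → Z, define u : Z → E(gf) as the composite π_{gf} ∘ E(E(1, g), 1) ∘ E(s, 1) ∘ t. Then (gf, u) is an L-coalgebra, and this composition law, together with the unique coalgebra structures on identities, makes the objects of C and L-coalgebras between them into a category C_L with an identity-on-objects forgetful functor C_L → C. -/
open CategoryTheory CategoryTheory.Limits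

universe v u

/-- A natural weak factorisation system on `C`, in reduced form: a functorial factorisation
`(E, λ, ρ)` together with natural families `σ_f : Ef ⟶ ELf` and `π_f : ERf ⟶ Ef`
satisfying the equations (nwfs1) and the distributivity equation (nwfs2). -/
structure ReducedNWFS (C : Type u) [Category.{v} C] where
  E : Arrow C ⥤ C
  l : (Arrow.leftFunc : Arrow C ⥤ C) ⟶ E
  r : E ⟶ (Arrow.rightFunc : Arrow C ⥤ C)
  fact : ∀ f : Arrow C, l.app f ≫ r.app f = f.hom
  σ : ∀ f : Arrow C, E.obj f ⟶ E.obj (Arrow.mk (l.app f))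
  π : ∀ f : Arrow C, E.obj (Arrow.mk (r.app f)) ⟶ E.obj f
  σ_l : ∀ f : Arrow C, l.app f ≫ σ f = l.app (Arrow.mk (l.app f))
  π_r : ∀ f : Arrow C, π f ≫ r.app f = r.app (Arrow.mk (r.app f))
  σ_natural : ∀ {f g : Arrow C} (sq : f ⟶ g),
    E.map sq ≫ σ g =
      σ f ≫ E.map (Arrow.homMk (f := Arrow.mk (l.app f)) (g := Arrow.mk (l.app g))
        (u := sq.left) (v := E.map sq) (l.naturality sq))
  π_natural : ∀ {f g : Arrow C} (sq : f ⟶ g),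
    E.map (Arrow.homMk (f := Arrow.mk (r.app f)) (g := Arrow.mk (r.app g))
        (u := E.map sq) (v := sq.right) (r.naturality sq)) ≫ π g =
      π f ≫ E.map sq
  eq1 : ∀ f : Arrow C, σ f ≫ r.app (Arrow.mk (l.app f)) = 𝟙 (E.obj f)
  eq2 : ∀ f : Arrow C, l.app (Arrow.mk (r.app f)) ≫ π f = 𝟙 (E.obj f)
  eq3 : ∀ f : Arrow C,
    σ f ≫ E.map (Arrow.homMk (f := Arrow.mk (l.app f)) (g := f) (u := 𝟙 f.left)
      (v := r.app f) ((Category.id_comp f.hom).trans (fact f).symm)) = 𝟙 (E.obj f)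
  eq4 : ∀ f : Arrow C,
    E.map (Arrow.homMk (f := f) (g := Arrow.mk (r.app f)) (u := l.app f)
      (v := 𝟙 f.right) ((fact f).trans (Category.comp_id f.hom).symm)) ≫ π f = 𝟙 (E.obj f)
  eq5 : ∀ f : Arrow C,
    σ f ≫ E.map (Arrow.homMk (f := Arrow.mk (l.app f))
        (g := Arrow.mk (l.app (Arrow.mk (l.app f)))) (u := 𝟙 f.left) (v := σ f)
        ((Category.id_comp _).trans (σ_l f).symm)) =
      σ f ≫ σ (Arrow.mk (l.app f))
  eq6 : ∀ f : Arrow C,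
    E.map (Arrow.homMk (f := Arrow.mk (r.app (Arrow.mk (r.app f))))
        (g := Arrow.mk (r.app f)) (u := π f) (v := 𝟙 f.right)
        ((π_r f).trans (Category.comp_id _).symm)) ≫ π f =
      π (Arrow.mk (r.app f)) ≫ π f
  distrib : ∀ f : Arrow C,
    π f ≫ σ f =
      σ (Arrow.mk (r.app f)) ≫
        E.map (Arrow.homMk (f := Arrow.mk (l.app (Arrow.mk (r.app f))))
            (g := Arrow.mk (r.app (Arrow.mk (l.app f)))) (u := σ f) (v := π f)
            ((eq1 f).trans (eq2 f).symm)) ≫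
          π (Arrow.mk (l.app f))

variable {C : Type u} [Category.{v} C]

/-- An `L`-coalgebra structure on an arrow `f` for (the comonad part of) a natural weak
factorisation system: `s : cod f ⟶ Ef` with `s ∘ f = λ_f`, `ρ_f ∘ s = id` and
`σ_f ∘ s = E(1, s) ∘ s`. -/
structure IsLCoalg (N : ReducedNWFS C) (f : Arrow C) (s : f.right ⟶ N.E.obj f) : Prop where
  straight : f.hom ≫ s = N.l.app f
  counit : s ≫ N.r.app f = 𝟙 f.right
  comul : s ≫ N.σ f =
    s ≫ N.E.map (Arrow.homMk (f := f) (g := Arrow.mk (N.l.app f)) (u := 𝟙 f.left)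
      (v := s) ((Category.id_comp _).trans straight.symm))

/-- The composite coalgebra structure `u = π_{gf} ∘ E(E(1, g), 1) ∘ E(s, 1) ∘ t` on `g ∘ f`
built from `L`-coalgebra structures `s` on `f` and `t` on `g`. -/
def compCoalg (N : ReducedNWFS C) {X Y Z : C} (f : X ⟶ Y) (g : Y ⟶ Z)
    (s : Y ⟶ N.E.obj (Arrow.mk f)) (t : Z ⟶ N.E.obj (Arrow.mk g))
    (hs : s ≫ N.r.app (Arrow.mk f) = 𝟙 Y) : Z ⟶ N.E.obj (Arrow.mk (f ≫ g)) :=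
  t ≫
    N.E.map (Arrow.homMk (f := Arrow.mk g) (g := Arrow.mk (N.r.app (Arrow.mk f) ≫ g))
      (u := s) (v := 𝟙 Z) (by exact ((Category.comp_id g).trans ((Category.id_comp g).symm.trans
        ((congrArg (fun k => k ≫ g) hs).symm.trans (Category.assoc _ _ _)))).symm)) ≫
    N.E.map (Arrow.homMk (f := Arrow.mk (N.r.app (Arrow.mk f) ≫ g))
      (g := Arrow.mk (N.r.app (Arrow.mk (f ≫ g))))
      (u := N.E.map (Arrow.homMk (f := Arrow.mk f) (g := Arrow.mk (f ≫ g))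
        (u := 𝟙 X) (v := g) (by simp)))
      (v := 𝟙 Z) (by exact (N.r.naturality (Arrow.homMk (f := Arrow.mk f)
        (g := Arrow.mk (f ≫ g)) (u := 𝟙 X) (v := g) (by simp))).trans (Category.comp_id _).symm)) ≫
    N.π (Arrow.mk (f ≫ g))

/-!
Write `u = π_{gf} ∘ E(c) ∘ t` with `c = (E(1, g) ∘ s, 1) : g ⟶ R(gf)`. Since `t g = λ_g`, naturality of
`λ` and `π λ = 1` give `u g = E(1, g) s`, whence `u g f = λ_{gf}`; `ρ u = 1` comes from `ρ π = ρ` and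
`ρ t = 1`. The comultiplication law for `u` is the distributivity `σ π = π E(σ, π) σ`, followed by the
comultiplication laws of `t` and of `s`. The only structure on `1_X` is `λ_{1_X}` (since `s ∘ 1 = λ`),
and the unit laws reduce to `π E(λ, 1) = 1` and `π λ = 1`. Both bracketings of a triple composite
equal `π π E(φ) u` for one square `φ : h ⟶ RR(hgf)` built from `s` and `t`, the left one by the
associativity `π E(π, 1) = π π` of `R`.
-/

namespace ReducedNWFS

variable (N : ReducedNWFS C)

lemma l_app_map_π {k m : Arrow C} (c : k ⟶ Arrow.mk (N.r.app m)) :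
    N.l.app k ≫ N.E.map c ≫ N.π m = c.left := by
  erw [← reassoc_of% N.l.naturality c, N.eq2]
  exact Category.comp_id _

lemma map_π_r_app {k m : Arrow C} (c : k ⟶ Arrow.mk (N.r.app m)) :
    N.E.map c ≫ N.π m ≫ N.r.app m = N.r.app k ≫ c.right := by
  rw [N.π_r]
  exact N.r.naturality c

lemma map_comp_eq_map {a b c : Arrow C} (p : a ⟶ b) (q : b ⟶ c) (pq : a ⟶ c)
    (hl : p.left ≫ q.left = pq.left) (hr : p.right ≫ q.right = pq.right) :
    N.E.map p ≫ N.E.map q = N.E.map pq := by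
  rw [← N.E.map_comp]
  congr 1
  exact Arrow.hom_ext _ _ hl hr

lemma map_eq_eqToHom {X Y : C} {k k' : X ⟶ Y} (e : k = k') (c : Arrow.mk k ⟶ Arrow.mk k')
    (hl : c.left = 𝟙 X) (hr : c.right = 𝟙 Y) :
    N.E.map c = eqToHom (congrArg (fun q : X ⟶ Y => N.E.obj (Arrow.mk q)) e) := by
  subst e
  rw [eqToHom_refl, ← N.E.map_id]
  congr 1
  exact Arrow.hom_ext _ _ hl hr

lemma map_π_eq_eqToHom {X Y : C} {f k : X ⟶ Y} (e : f = k)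
    (c : Arrow.mk f ⟶ Arrow.mk (N.r.app (Arrow.mk k)))
    (hl : c.left = N.l.app (Arrow.mk k)) (hr : c.right = 𝟙 Y) :
    N.E.map c ≫ N.π (Arrow.mk k) =
      eqToHom (congrArg (fun q : X ⟶ Y => N.E.obj (Arrow.mk q)) e) := by
  subst e
  rw [eqToHom_refl, ← N.eq4]
  congr 2
  exact Arrow.hom_ext _ _ hl hr

def extendSq {X Y W : C} (f : X ⟶ Y) (v : Y ⟶ W) {k : X ⟶ W} (hk : f ≫ v = k) :
    Arrow.mk f ⟶ Arrow.mk k :=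
  Arrow.homMk' (𝟙 X) v

lemma l_app_map_extendSq {X Y W : C} (f : X ⟶ Y) (v : Y ⟶ W) {k : X ⟶ W} (hk : f ≫ v = k) :
    N.l.app (Arrow.mk f) ≫ N.E.map (extendSq f v hk) = N.l.app (Arrow.mk k) := by
  erw [← N.l.naturality]
  exact Category.id_comp _

def liftSq {X Y Z : C} {f : X ⟶ Y} (s : Y ⟶ N.E.obj (Arrow.mk f))
    (hs : s ≫ N.r.app (Arrow.mk f) = 𝟙 Y) {m : Arrow C} (p : Arrow.mk f ⟶ m)
    {g : Y ⟶ Z} (b : Z ⟶ m.right) (hb : g ≫ b = p.right) :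
    Arrow.mk g ⟶ Arrow.mk (N.r.app m) :=
  Arrow.homMk' (s ≫ N.E.map p) b (by
    erw [Category.assoc, N.r.naturality p, reassoc_of% hs, hb]
    exact Category.id_comp _)

lemma compCoalg_eq {X Y Z : C} (f : X ⟶ Y) (g : Y ⟶ Z)
    (s : Y ⟶ N.E.obj (Arrow.mk f)) (t : Z ⟶ N.E.obj (Arrow.mk g))
    (hs : s ≫ N.r.app (Arrow.mk f) = 𝟙 Y) :
    compCoalg N f g s t hs =
      t ≫ N.E.map (N.liftSq s hs (extendSq f g rfl) (𝟙 Z) (Category.comp_id g)) ≫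
        N.π (Arrow.mk (f ≫ g)) := by
  rw [compCoalg, ← N.E.map_comp_assoc]
  congr 3
  exact Arrow.hom_ext _ _ rfl (Category.id_comp _)

lemma isLCoalg_l_app_id (X : C) :
    IsLCoalg N (Arrow.mk (𝟙 X)) (N.l.app (Arrow.mk (𝟙 X))) where
  straight := Category.id_comp _
  counit := N.fact _
  comul := by
    erw [N.σ_l, ← N.l.naturality]
    exact (Category.id_comp _).symm

end ReducedNWFS

namespace IsLCoalg

open ReducedNWFS

variable {N : ReducedNWFS C}

lemma hom_comp {X Y : C} {f : X ⟶ Y} {s : Y ⟶ N.E.obj (Arrow.mk f)}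
    (hs : IsLCoalg N (Arrow.mk f) s) : f ≫ s = N.l.app (Arrow.mk f) :=
  hs.straight

lemma eq_l_app_of_id {X : C} {sX : X ⟶ N.E.obj (Arrow.mk (𝟙 X))}
    (hX : IsLCoalg N (Arrow.mk (𝟙 X)) sX) : sX = N.l.app (Arrow.mk (𝟙 X)) := by
  simpa using hX.straight

lemma comp_map_σ {X Y : C} {f : X ⟶ Y} {s : Y ⟶ N.E.obj (Arrow.mk f)}
    (hs : IsLCoalg N (Arrow.mk f) s) {m : Arrow C} (p : Arrow.mk f ⟶ m)
    (q : Arrow.mk f ⟶ Arrow.mk (N.l.app m)) (hl : q.left = p.left)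
    (hr : q.right = s ≫ N.E.map p) :
    s ≫ N.E.map p ≫ N.σ m = s ≫ N.E.map q := by
  rw [N.σ_natural, reassoc_of% hs.comul, N.map_comp_eq_map]
  · exact (Category.id_comp _).trans hl.symm
  · exact hr.symm

variable {X Y Z : C} {f : X ⟶ Y} {g : Y ⟶ Z}
  {s : Y ⟶ N.E.obj (Arrow.mk f)} {t : Z ⟶ N.E.obj (Arrow.mk g)}

lemma comp_compCoalg (ht : IsLCoalg N (Arrow.mk g) t) (hs : s ≫ N.r.app (Arrow.mk f) = 𝟙 Y) :
    g ≫ compCoalg N f g s t hs = s ≫ N.E.map (extendSq f g rfl) := by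
  rw [N.compCoalg_eq, reassoc_of% ht.hom_comp]
  erw [N.l_app_map_π]
  rfl

lemma compCoalg_σ (hs : IsLCoalg N (Arrow.mk f) s) (ht : IsLCoalg N (Arrow.mk g) t)
    (q : Arrow.mk (f ≫ g) ⟶ Arrow.mk (N.l.app (Arrow.mk (f ≫ g))))
    (hl : q.left = 𝟙 X) (hr : q.right = compCoalg N f g s t hs.counit) :
    compCoalg N f g s t hs.counit ≫ N.σ (Arrow.mk (f ≫ g)) =
      compCoalg N f g s t hs.counit ≫ N.E.map q := by
  rw [N.compCoalg_eq]
  simp only [Category.assoc]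
  rw [N.distrib, reassoc_of% N.σ_natural, reassoc_of% ht.comul, ← N.π_natural q]
  simp only [← Functor.map_comp_assoc]
  congr 3
  ext
  · change 𝟙 Y ≫ (s ≫ N.E.map (extendSq f g rfl)) ≫ N.σ _ =
      (s ≫ N.E.map (extendSq f g rfl)) ≫ N.E.map q
    rw [Category.id_comp, Category.assoc, Category.assoc,
      hs.comp_map_σ _ (extendSq f g rfl ≫ q), Functor.map_comp]
    · rw [Arrow.comp_left, hl]
      exact Category.comp_id _
    · rw [Arrow.comp_right, hr]
      exact ht.comp_compCoalg hs.counit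
  · change t ≫ N.E.map _ ≫ N.π _ = 𝟙 Z ≫ q.right
    rw [hr, N.compCoalg_eq, Category.id_comp]

lemma comp (hs : IsLCoalg N (Arrow.mk f) s) (ht : IsLCoalg N (Arrow.mk g) t) :
    IsLCoalg N (Arrow.mk (f ≫ g)) (compCoalg N f g s t hs.counit) where
  straight := by
    change (f ≫ g) ≫ _ = _
    rw [Category.assoc, ht.comp_compCoalg hs.counit, reassoc_of% hs.hom_comp]
    exact N.l_app_map_extendSq f g rfl
  counit := by
    rw [N.compCoalg_eq]
    simp only [Category.assoc]
    erw [N.map_π_r_app, reassoc_of% ht.counit]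
    exact Category.id_comp _
  comul := hs.compCoalg_σ ht _ rfl rfl

lemma compCoalg_id_left {sX : X ⟶ N.E.obj (Arrow.mk (𝟙 X))}
    (hX : IsLCoalg N (Arrow.mk (𝟙 X)) sX) (s : Y ⟶ N.E.obj (Arrow.mk f)) :
    compCoalg N (𝟙 X) f sX s hX.counit =
      s ≫ eqToHom (congrArg (fun q : X ⟶ Y => N.E.obj (Arrow.mk q))
        (Category.id_comp f).symm) := by
  rw [N.compCoalg_eq, N.map_π_eq_eqToHom (Category.id_comp f).symm _ _ rfl]
  change sX ≫ _ = _
  rw [hX.eq_l_app_of_id]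
  exact N.l_app_map_extendSq (𝟙 X) f rfl

lemma compCoalg_id_right {sY : Y ⟶ N.E.obj (Arrow.mk (𝟙 Y))}
    (hY : IsLCoalg N (Arrow.mk (𝟙 Y)) sY) (hs : s ≫ N.r.app (Arrow.mk f) = 𝟙 Y) :
    compCoalg N f (𝟙 Y) s sY hs =
      s ≫ eqToHom (congrArg (fun q : X ⟶ Y => N.E.obj (Arrow.mk q))
        (Category.comp_id f).symm) := by
  rw [N.compCoalg_eq, hY.eq_l_app_of_id]
  erw [N.l_app_map_π]
  exact congrArg (s ≫ ·) (N.map_eq_eqToHom (Category.comp_id f).symm _ rfl rfl)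

end IsLCoalg

namespace ReducedNWFS

variable (N : ReducedNWFS C) {X Y Z W : C} {f : X ⟶ Y} {g : Y ⟶ Z} {h : Z ⟶ W}
  {s : Y ⟶ N.E.obj (Arrow.mk f)} {t : Z ⟶ N.E.obj (Arrow.mk g)}

def assocSq (hs : s ≫ N.r.app (Arrow.mk f) = 𝟙 Y) (ht : t ≫ N.r.app (Arrow.mk g) = 𝟙 Z)
    (k : X ⟶ W) (hk : f ≫ g ≫ h = k) :
    Arrow.mk h ⟶ Arrow.mk (N.r.app (Arrow.mk (N.r.app (Arrow.mk k)))) :=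
  N.liftSq t ht (N.liftSq s hs (extendSq f (g ≫ h) hk) h rfl) (𝟙 W) (Category.comp_id h)

lemma compCoalg_map_extendSq (hs : s ≫ N.r.app (Arrow.mk f) = 𝟙 Y) (h : Z ⟶ W) :
    compCoalg N f g s t hs ≫ N.E.map (extendSq (f ≫ g) h rfl) =
      t ≫ N.E.map (N.liftSq s hs (extendSq f (g ≫ h) (Category.assoc f g h).symm) h rfl) ≫
        N.π _ := by
  rw [N.compCoalg_eq]
  simp only [Category.assoc]
  rw [← N.π_natural, ← Functor.map_comp_assoc]
  congr 3
  ext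
  · change (s ≫ N.E.map (extendSq f g rfl)) ≫ N.E.map (extendSq (f ≫ g) h rfl) =
      s ≫ N.E.map (extendSq f (g ≫ h) _)
    rw [Category.assoc s, N.map_comp_eq_map _ _ (extendSq f (g ≫ h) _) (Category.id_comp _) rfl]
  · exact Category.id_comp _

lemma compCoalg_compCoalg_left (hs : s ≫ N.r.app (Arrow.mk f) = 𝟙 Y)
    (ht : t ≫ N.r.app (Arrow.mk g) = 𝟙 Z) (u : W ⟶ N.E.obj (Arrow.mk h))
    (hst : compCoalg N f g s t hs ≫ N.r.app (Arrow.mk (f ≫ g)) = 𝟙 Z) :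
    compCoalg N (f ≫ g) h (compCoalg N f g s t hs) u hst =
      u ≫ N.E.map (N.assocSq hs ht ((f ≫ g) ≫ h) (Category.assoc f g h).symm) ≫
        N.π _ ≫ N.π (Arrow.mk ((f ≫ g) ≫ h)) := by
  rw [N.compCoalg_eq, ← N.eq6, ← Functor.map_comp_assoc]
  congr 3
  ext
  · exact (N.compCoalg_map_extendSq hs h).trans (Category.assoc _ _ _).symm
  · exact (Category.comp_id _).symm

lemma compCoalg_compCoalg_right (hs : s ≫ N.r.app (Arrow.mk f) = 𝟙 Y)
    (ht : t ≫ N.r.app (Arrow.mk g) = 𝟙 Z) (u : W ⟶ N.E.obj (Arrow.mk h)) :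
    compCoalg N f (g ≫ h) s (compCoalg N g h t u ht) hs =
      u ≫ N.E.map (N.assocSq hs ht (f ≫ g ≫ h) rfl) ≫ N.π _ ≫ N.π (Arrow.mk (f ≫ g ≫ h)) := by
  rw [N.compCoalg_eq, N.compCoalg_eq]
  simp only [Category.assoc]
  rw [← reassoc_of% N.π_natural, ← Functor.map_comp_assoc]
  congr 3
  ext
  · change (t ≫ N.E.map (extendSq g h rfl)) ≫
        N.E.map (N.liftSq s hs (extendSq f (g ≫ h) rfl) (𝟙 W) (Category.comp_id _)) =
      t ≫ N.E.map (N.liftSq s hs (extendSq f (g ≫ h) rfl) h rfl)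
    rw [Category.assoc t, N.map_comp_eq_map _ _ (N.liftSq s hs (extendSq f (g ≫ h) rfl) h rfl)
      (Category.id_comp _) (Category.comp_id _)]
  · exact Category.comp_id _

lemma assocSq_eqToHom (hs : s ≫ N.r.app (Arrow.mk f) = 𝟙 Y)
    (ht : t ≫ N.r.app (Arrow.mk g) = 𝟙 Z) (u : W ⟶ N.E.obj (Arrow.mk h)) {k k' : X ⟶ W}
    (hk : f ≫ g ≫ h = k) (hk' : f ≫ g ≫ h = k') (e : k = k') :
    u ≫ N.E.map (N.assocSq hs ht k hk) ≫ N.π _ ≫ N.π (Arrow.mk k) ≫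
        eqToHom (congrArg (fun q : X ⟶ W => N.E.obj (Arrow.mk q)) e) =
      u ≫ N.E.map (N.assocSq hs ht k' hk') ≫ N.π _ ≫ N.π (Arrow.mk k') := by
  subst e
  simp

lemma compCoalg_assoc (hs : s ≫ N.r.app (Arrow.mk f) = 𝟙 Y)
    (ht : t ≫ N.r.app (Arrow.mk g) = 𝟙 Z) (u : W ⟶ N.E.obj (Arrow.mk h))
    (hst : compCoalg N f g s t hs ≫ N.r.app (Arrow.mk (f ≫ g)) = 𝟙 Z) :
    compCoalg N (f ≫ g) h (compCoalg N f g s t hs) u hst =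
      compCoalg N f (g ≫ h) s (compCoalg N g h t u ht) hs ≫
        eqToHom (congrArg (fun q : X ⟶ W => N.E.obj (Arrow.mk q)) (Category.assoc f g h).symm) := by
  rw [N.compCoalg_compCoalg_left hs ht u hst, N.compCoalg_compCoalg_right hs ht u]
  simp only [Category.assoc]
  exact (N.assocSq_eqToHom hs ht u rfl _ (Category.assoc f g h).symm).symm

end ReducedNWFS

/-- for a natural weak factorisation system `(L, R, Δ)` on `C`, the composite
`(gf, u)` of `L`-coalgebras `(f, s)` and `(g, t)` is again an `L`-coalgebra, and this
composition law, together with the unique coalgebra structures on identities, makes the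
objects of `C` and the `L`-coalgebras between them into a category `C_L` (with an
identity-on-objects forgetful functor to `C`). -/
theorem stmt17 (N : ReducedNWFS C) :
    -- composites of `L`-coalgebras are `L`-coalgebras
    (∀ {X Y Z : C} (f : X ⟶ Y) (g : Y ⟶ Z)
      (s : Y ⟶ N.E.obj (Arrow.mk f)) (t : Z ⟶ N.E.obj (Arrow.mk g))
      (hs : IsLCoalg N (Arrow.mk f) s), IsLCoalg N (Arrow.mk g) t →
        IsLCoalg N (Arrow.mk (f ≫ g)) (compCoalg N f g s t hs.counit)) ∧
    -- identities carry a unique `L`-coalgebra structure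
    (∀ X : C, ∃! sX : X ⟶ N.E.obj (Arrow.mk (𝟙 X)), IsLCoalg N (Arrow.mk (𝟙 X)) sX) ∧
    -- left and right unit laws for the composition
    (∀ {X Y : C} (f : X ⟶ Y) (sX : X ⟶ N.E.obj (Arrow.mk (𝟙 X)))
      (s : Y ⟶ N.E.obj (Arrow.mk f)) (hX : IsLCoalg N (Arrow.mk (𝟙 X)) sX),
      IsLCoalg N (Arrow.mk f) s →
        compCoalg N (𝟙 X) f sX s hX.counit =
          s ≫ eqToHom (congrArg (fun q : X ⟶ Y => N.E.obj (Arrow.mk q))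
            (Category.id_comp f).symm)) ∧
    (∀ {X Y : C} (f : X ⟶ Y) (s : Y ⟶ N.E.obj (Arrow.mk f))
      (sY : Y ⟶ N.E.obj (Arrow.mk (𝟙 Y))) (hs : IsLCoalg N (Arrow.mk f) s),
      IsLCoalg N (Arrow.mk (𝟙 Y)) sY →
        compCoalg N f (𝟙 Y) s sY hs.counit =
          s ≫ eqToHom (congrArg (fun q : X ⟶ Y => N.E.obj (Arrow.mk q))
            (Category.comp_id f).symm)) ∧
    -- associativity of the composition
    (∀ {X Y Z W : C} (f : X ⟶ Y) (g : Y ⟶ Z) (h : Z ⟶ W)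
      (s : Y ⟶ N.E.obj (Arrow.mk f)) (t : Z ⟶ N.E.obj (Arrow.mk g))
      (u : W ⟶ N.E.obj (Arrow.mk h))
      (hs : IsLCoalg N (Arrow.mk f) s) (ht : IsLCoalg N (Arrow.mk g) t)
      (hu : IsLCoalg N (Arrow.mk h) u)
      (hfg : IsLCoalg N (Arrow.mk (f ≫ g)) (compCoalg N f g s t hs.counit)),
      compCoalg N (f ≫ g) h (compCoalg N f g s t hs.counit) u hfg.counit =
        compCoalg N f (g ≫ h) s (compCoalg N g h t u ht.counit) hs.counit ≫
          eqToHom (congrArg (fun q : X ⟶ W => N.E.obj (Arrow.mk q))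
            (Category.assoc f g h).symm)) :=
  ⟨fun _ _ _ _ hs ht => hs.comp ht,
    fun X => ⟨_, N.isLCoalg_l_app_id X, fun _ hX => hX.eq_l_app_of_id⟩,
    fun _ _ s hX _ => hX.compCoalg_id_left s,
    fun _ _ _ hs hY => hY.compCoalg_id_right hs.counit,
    fun _ _ _ _ _ u hs ht _ hfg => N.compCoalg_assoc hs.counit ht.counit u hfg.counit⟩
end
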